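/- arXiv:2504.17301 — 2 statements merged into one kernel-verified Lean document; each statement's English description precedes it below -/
import Mathlib

section
/- Let G be a finite solvable group and let K be the smallest normal subgroup of G such that G/K is nilpotent. If K is abelian, then K is complemented in G, and every complement of K in G is a Carter subgroup (i.e., a self-normalizing nilpotent subgroup) of G. -/
noncomputable section
open scoped Classical

/-- `χ` is an irreducible (complex) character of the finite group `H`. -/
def IsIrrChar (H : Type) [Group H] (χ : H → ℂ) : Prop :=
  ∃ V : FDRep ℂ H, CategoryTheory.Simple V ∧ χ = V.character

/-- The usual inner product of class functions on `H`. -/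
def charInner (H : Type) [Group H] (χ θ : H → ℂ) : ℂ :=
  (Nat.card H : ℂ)⁻¹ * ∑ᶠ h : H, χ h * (starRingEnd ℂ) (θ h)

/-- `θ` is an irreducible constituent of the character `χ`. -/
def IsConstituent (H : Type) [Group H] (χ θ : H → ℂ) : Prop :=
  IsIrrChar H θ ∧ charInner H χ θ ≠ 0

variable {G : Type}

/-- Restriction of a character of `A` to a subgroup `B ≤ A`. -/
def resSub [Group G] {A B : Subgroup G} (h : B ≤ A) (χ : ↥A → ℂ) : ↥B → ℂ :=
  fun b => χ ⟨b, h b.2⟩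

/-- Restriction of a character of `G` to a subgroup `B`. -/
def resTop [Group G] (B : Subgroup G) (χ : G → ℂ) : ↥B → ℂ := fun b => χ b

/-- The induced character from `B ≤ A`. -/
def indSub [Group G] {A B : Subgroup G} (_h : B ≤ A) (φ : ↥B → ℂ) : ↥A → ℂ :=
  fun a => (Nat.card ↥B : ℂ)⁻¹ *
    ∑ᶠ x : ↥A, if hx : ((x : G) * a * (x : G)⁻¹) ∈ B then φ ⟨_, hx⟩ else 0

/-- `χ`, a character of `M ≤ G`, is invariant under conjugation by elements of `C`. -/
def ConjInv [Group G] (C M : Subgroup G) (χ : ↥M → ℂ) : Prop :=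
  ∀ c ∈ C, ∀ m : ↥M, ∀ hm : c * (m : G) * c⁻¹ ∈ M, χ ⟨c * m * c⁻¹, hm⟩ = χ m

/-- `χ`, a character of `M ≤ G`, is `G`-invariant. -/
def GInv [Group G] (M : Subgroup G) (χ : ↥M → ℂ) : Prop :=
  ∀ g : G, ∀ m : ↥M, ∀ hm : g * (m : G) * g⁻¹ ∈ M, χ ⟨g * m * g⁻¹, hm⟩ = χ m

/-- The field of values `ℚ(χ)` of a character, as a subfield of `ℂ`. -/
def fieldOfValues (H : Type) (χ : H → ℂ) : Subfield ℂ := Subfield.closure (Set.range χ)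

/-- The `n`-th cyclotomic field `ℚ_n` inside `ℂ`. -/
def cycSubfield (n : ℕ) : Subfield ℂ := Subfield.closure {x : ℂ | x ^ n = 1}

/-- `K` is the smallest normal subgroup of `G` with nilpotent quotient. -/
def NilpotentResidual [Group G] (K : Subgroup G) (hK : K.Normal) : Prop :=
  (letI := hK; Group.IsNilpotent (G ⧸ K)) ∧
    ∀ N : Subgroup G, (hN : N.Normal) → (letI := hN; Group.IsNilpotent (G ⧸ N)) → K ≤ N

/-- A Carter subgroup: a self-normalizing nilpotent subgroup. -/
def IsCarter [Group G] (C : Subgroup G) : Prop :=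
  Group.IsNilpotent ↥C ∧ Subgroup.normalizer (C : Set G) = C

/-- A linear character, i.e. a multiplicative homomorphism to `ℂ`. -/
def IsLinChar (H : Type) [Group H] (χ : H → ℂ) : Prop :=
  ∃ l : H →* ℂ, χ = ⇑l

/-- `Ext(G|θ)`: irreducible characters of `G` restricting to `θ` on `K`. -/
def ExtSet [Group G] (K : Subgroup G) (θ : ↥K → ℂ) : Set (G → ℂ) :=
  {χ | IsIrrChar G χ ∧ resTop K χ = θ}

/-- `Ext(A|φ)` for subgroups `B ≤ A` of `G`. -/
def ExtSub [Group G] {A B : Subgroup G} (h : B ≤ A) (φ : ↥B → ℂ) : Set (↥A → ℂ) :=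
  {χ | IsIrrChar ↥A χ ∧ resSub h χ = φ}


/-- The character of `G` induced from a character of the subgroup `B`. -/
def indTop [Group G] (B : Subgroup G) (φ : ↥B → ℂ) : G → ℂ :=
  fun g => (Nat.card ↥B : ℂ)⁻¹ *
    ∑ᶠ x : G, if hx : (x * g * x⁻¹) ∈ B then φ ⟨_, hx⟩ else 0


/-!
Since `G ⧸ ⁅K, ⊤⁆` is a central extension of the nilpotent group `G ⧸ K`, the residual satisfies
`K = ⁅K, G⁆`; this, the commutativity of `K` and the nilpotency of `G ⧸ K` pass to quotients
`G ⧸ N` with `N ≤ K`. Split `K` into its `p'`-part `A` and its `p`-part `B`. Complements of `K ⧸ A`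
(the `p`-group case) and of `K ⧸ B` (induction on `|K|`) pull back to supplements `X`, `Y` of `K`
with `K ⊓ X = A` and `K ⊓ Y = B`; then `X ⊓ Y` complements `K`, and `K ⊓ Z(G) ≤ A ⊓ B = 1`.

If `K` is a `p`-group, let `S ⧸ K` be the Sylow `p`-subgroup of `G ⧸ K` and `H` a Schur–Zassenhaus
complement of `S`. In the nilpotent group `G ⧸ K` elements of coprime order commute, so
`⁅H, S⁆ ≤ K`; as `S ⧸ ⁅H, K⁆` is a `p`-group, `K = ⁅K, G⁆` forces `K = ⁅H, K⁆`. The coprime action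
of `H` on `K` then has no nontrivial fixed points, so `K ⊓ Z(G) = 1`, and averaging over `H`
corrects every element of `S` by an element of `K` into `N_G(H)`, so `N_G(H)` complements `K`.

A complement `C ≅ G ⧸ K` is nilpotent, and an element of `K` normalising `C` centralises both `C`
and the abelian group `K`, so it is central, hence trivial: `C` is self-normalising.
-/

open scoped commutatorElement Pointwise

open Subgroup

theorem commutatorElement_pow_orderOf_eq_one {G : Type*} [Group G] {a b : G}
    (h : ⁅a, b⁆ ∈ center G) : ⁅a, b⁆ ^ orderOf b = 1 := by
  have hcomm : Commute ⁅a, b⁆ b := ((mem_center_iff.mp h) b).symm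
  have := congrArg (· ^ orderOf b) (show a * b * a⁻¹ = ⁅a, b⁆ * b by group)
  simpa [conj_pow, pow_orderOf_eq_one, hcomm.mul_pow] using this.symm

theorem Group.commute_of_coprime_orderOf {G : Type*} [Group G] [Group.IsNilpotent G] {x y : G}
    (hxy : (orderOf x).Coprime (orderOf y)) : Commute x y := by
  refine nilpotent_center_quotient_ind
    (P := fun G _ _ => ∀ x y : G, (orderOf x).Coprime (orderOf y) → Commute x y) G
    (fun _ _ _ _ _ _ => Subsingleton.elim _ _) (fun G _ _ ih x y hxy => ?_) x y hxy
  set π := QuotientGroup.mk' (center G)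
  have hxy_center : ⁅x, y⁆ ∈ center G := by
    rw [← QuotientGroup.ker_mk' (center G), MonoidHom.mem_ker, map_commutatorElement,
      commutatorElement_eq_one_iff_commute]
    exact ih _ _ ((hxy.coprime_dvd_left (orderOf_map_dvd π x)).coprime_dvd_right
      (orderOf_map_dvd π y))
  have hyx_center : ⁅y, x⁆ ∈ center G := by
    rw [← commutatorElement_inv]; exact inv_mem hxy_center
  have hy := commutatorElement_pow_orderOf_eq_one hxy_center
  have hx := commutatorElement_pow_orderOf_eq_one hyx_center
  rw [← commutatorElement_inv, inv_pow, inv_eq_one] at hx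
  have : ⁅x, y⁆ = 1 := by simpa [hxy] using pow_gcd_eq_one.mpr ⟨hx, hy⟩
  exact commutatorElement_eq_one_iff_commute.mp this

namespace Subgroup

variable {G : Type*} [Group G]

theorem eq_bot_of_le_commutator {N P : Subgroup G} [Group.IsNilpotent P] (hNP : N ≤ P)
    (h : N ≤ ⁅N, P⁆) : N = ⊥ := by
  have key : ∀ n, N ≤ P.lowerCentralSeries n := fun n => by
    induction n with
    | zero => exact hNP
    | succ n ih => exact h.trans (commutator_mono ih le_rfl)
  exact le_bot_iff.mp (lowerCentralSeries_eq_bot_of_nilpotencyClass_le (S := P) le_rfl ▸ key _)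

theorem exists_mul_eq_of_sup_eq_top {N H : Subgroup G} [N.Normal] (h : N ⊔ H = ⊤) (g : G) :
    ∃ n ∈ N, ∃ k ∈ H, n * k = g :=
  Set.mem_mul.mp (by rw [← normal_mul, h]; exact mem_top g)

theorem isComplement'_of_isCompl {K C : Subgroup G} [K.Normal] (h : IsCompl K C) :
    K.IsComplement' C :=
  isComplement'_of_disjoint_and_mul_eq_univ h.disjoint (by rw [← normal_mul, h.sup_eq_top, coe_top])

theorem inf_normalizer_le_centralizer {K C : Subgroup G} [K.Normal] (h : Disjoint K C) :
    K ⊓ normalizer (C : Set G) ≤ centralizer C := by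
  rintro k ⟨hk, hkC⟩
  refine mem_centralizer_iff.mpr fun c hc => ?_
  have hK : ⁅k, c⁆ ∈ K := by
    rw [commutatorElement_def, mul_assoc, mul_assoc]
    exact mul_mem hk (by simpa [mul_assoc] using Normal.conj_mem ‹_› _ (inv_mem hk) c)
  have hC : ⁅k, c⁆ ∈ C := by
    rw [commutatorElement_def]
    exact mul_mem ((mem_normalizer_iff.mp hkC c).mp hc) (inv_mem hc)
  exact (commutatorElement_eq_one_iff_commute.mp (disjoint_def.mp h hK hC)).symm

section CoprimeAction

open scoped IsMulCommutative

variable [Finite G] {H K : Subgroup G} [K.Normal] [IsMulCommutative K]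

theorem inf_centralizer_eq_bot_of_coprime (hcop : (Nat.card H).Coprime (Nat.card K))
    (hK : K ≤ ⁅H, K⁆) : K ⊓ centralizer H = ⊥ := by
  have := Fintype.ofFinite H
  -- the norm map `k ↦ ∏ h k h⁻¹` kills `⁅H, K⁆ = K` and raises fixed points to the power `|H|`
  let F : K →* K := ∏ h : H, (MulAut.conjNormal (h : G)).toMonoidHom
  have hF_apply (k : K) : F k = ∏ h : H, MulAut.conjNormal (h : G) k :=
    MonoidHom.finsetProd_apply _ _ _
  have hF_conj (h₀ : H) (k : K) : F (MulAut.conjNormal (h₀ : G) k) = F k := by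
    simp only [hF_apply, ← MulAut.mul_apply, ← map_mul, ← coe_mul]
    exact Fintype.prod_equiv (Equiv.mulRight h₀) _ _ fun _ => rfl
  have hF_ker : K ≤ F.ker.map K.subtype := by
    refine hK.trans (commutator_le.mpr fun h hh k hk => ?_)
    have hmem : MulAut.conjNormal h ⟨k, hk⟩ * (⟨k, hk⟩ : K)⁻¹ ∈ F.ker := by
      rw [MonoidHom.mem_ker, map_mul, map_inv, hF_conj ⟨h, hh⟩, mul_inv_cancel]
    exact ⟨_, hmem, by simp [MulAut.conjNormal_apply, commutatorElement_def]⟩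
  rw [eq_bot_iff]
  rintro z ⟨hzK, hzC⟩
  have hFz : F ⟨z, hzK⟩ = ⟨z, hzK⟩ ^ Nat.card H := by
    have (h : H) : MulAut.conjNormal (h : G) ⟨z, hzK⟩ = ⟨z, hzK⟩ := by
      ext; simp [MulAut.conjNormal_apply, (mem_centralizer_iff.mp hzC h h.2)]
    simp [hF_apply, this, Nat.card_eq_fintype_card]
  obtain ⟨k, hk, rfl⟩ := hF_ker hzK
  have : k ^ Nat.card H = 1 ^ Nat.card H := by
    rw [one_pow, ← hk]; simpa using hFz.symm
  simpa using (Nat.Coprime.pow_left_bijective hcop.symm).injective this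

theorem exists_mul_mem_centralizer_of_coprime (hcop : (Nat.card H).Coprime (Nat.card K))
    {x : G} (hx : ∀ h ∈ H, ⁅h, x⁆ ∈ K) : ∃ z ∈ K, x * z ∈ centralizer H := by
  have := Fintype.ofFinite H
  -- `a` is a 1-cocycle of `H` in `K`; it is the coboundary of an `|H|`-th root of `∏ a`
  let a (h : H) : K := ⟨x⁻¹ * (h * x * h⁻¹), by
    simpa [commutatorElement_def, mul_assoc] using Normal.conj_mem ‹_› _ (hx h h.2) x⁻¹⟩
  have ha (h₀ h : H) : MulAut.conjNormal (h₀ : G) (a h) = (a h₀)⁻¹ * a (h₀ * h) := by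
    ext
    simp only [MulAut.conjNormal_apply, a, coe_mul, coe_inv, mul_inv_rev, inv_inv]
    group
  let y : K := ∏ h : H, a h
  have hy (h₀ : H) : MulAut.conjNormal (h₀ : G) y = (a h₀)⁻¹ ^ Nat.card H * y := by
    simp only [y, map_prod, ha, Finset.prod_mul_distrib, Finset.prod_const, Finset.card_univ,
      Nat.card_eq_fintype_card]
    congr 1
    exact Fintype.prod_equiv (Equiv.mulLeft h₀) _ _ fun _ => rfl
  obtain ⟨z, hz⟩ := (Nat.Coprime.pow_left_bijective hcop.symm).surjective y
  have hz_conj (h : H) : MulAut.conjNormal (h : G) z = (a h)⁻¹ * z := by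
    apply (Nat.Coprime.pow_left_bijective hcop.symm).injective
    simp only [← map_pow, hz, hy, mul_pow]
  refine ⟨z, z.2, mem_centralizer_iff.mpr fun h hh => ?_⟩
  have := congrArg Subtype.val (hz_conj ⟨h, hh⟩)
  simp only [MulAut.conjNormal_apply, a, coe_mul, coe_inv, mul_inv_rev, inv_inv] at this
  calc h * (x * z) = h * x * h⁻¹ * (h * z * h⁻¹) * h := by group
    _ = x * z * h := by rw [this]; group

theorem isCompl_normalizer_of_coprime {S : Subgroup G} [S.Normal]
    (hcop : (Nat.card H).Coprime (Nat.card K)) (hKC : K ⊓ centralizer H = ⊥) (hKS : K ≤ S)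
    (hSH : S.IsComplement' H) (hHS : ∀ h ∈ H, ∀ s ∈ S, ⁅h, s⁆ ∈ K) :
    IsCompl K (normalizer (H : Set G)) := by
  refine ⟨?_, ?_⟩
  · rw [disjoint_iff, eq_bot_iff, ← hKC]
    exact le_inf inf_le_left (inf_normalizer_le_centralizer (hSH.disjoint.mono_left hKS))
  · rw [codisjoint_iff, eq_top_iff]
    intro g _
    obtain ⟨s, hs, h, hh, rfl⟩ := exists_mul_eq_of_sup_eq_top hSH.sup_eq_top g
    obtain ⟨z, hz, hsz⟩ := exists_mul_mem_centralizer_of_coprime hcop fun h' hh' => hHS h' hh' s hs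
    rw [show s * h = s * z⁻¹ * s⁻¹ * (s * z * h) by group]
    exact mul_mem_sup (Normal.conj_mem ‹_› _ (inv_mem hz) s)
      (mul_mem (centralizer_le_normalizer _ hsz) (le_normalizer hh))

end CoprimeAction

theorem commutator_normal_of_supplement {K S H : Subgroup G} [K.Normal] [IsMulCommutative K]
    (hSH : S ⊔ H = ⊤) (hHS : ∀ h ∈ H, ∀ s ∈ S, ⁅h, s⁆ ∈ K) : (⁅H, K⁆).Normal := by
  rw [← normalizer_eq_top_iff, eq_top_iff, ← hSH, commutator_def]
  refine sup_le (le_normalizer_closure_iff.mpr ?_) (le_normalizer_closure_iff.mpr ?_)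
  · rintro s hs _ ⟨h, hh, k, hk, rfl⟩
    -- `s h s⁻¹ = h c` with `c ∈ K`, and `c` commutes with `s k s⁻¹ ∈ K`
    have hc : h⁻¹ * s * h * s⁻¹ ∈ K := by
      simpa [commutatorElement_def, mul_assoc] using hHS _ (inv_mem hh) s hs
    have hk' : s * k * s⁻¹ ∈ K := Normal.conj_mem ‹_› k hk s
    have hcomm := setLike_mul_comm hc hk'
    have : s * ⁅h, k⁆ * s⁻¹ = ⁅h, s * k * s⁻¹⁆ := calc
      _ = h * ((h⁻¹ * s * h * s⁻¹) * (s * k * s⁻¹)) * (h⁻¹ * s * h * s⁻¹)⁻¹ * h⁻¹ *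
          (s * k * s⁻¹)⁻¹ := by simp only [commutatorElement_def]; group
      _ = ⁅h, s * k * s⁻¹⁆ := by rw [hcomm, commutatorElement_def]; group
    rw [this]
    exact subset_closure ⟨h, hh, _, hk', rfl⟩
  · rintro h' hh' _ ⟨h, hh, k, hk, rfl⟩
    rw [show h' * ⁅h, k⁆ * h'⁻¹ = ⁅h' * h * h'⁻¹, h' * k * h'⁻¹⁆ by
      simp only [commutatorElement_def]; group]
    exact subset_closure ⟨_, mul_mem (mul_mem hh' hh) (inv_mem hh'), _,
      Normal.conj_mem ‹_› k hk h', rfl⟩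

theorem le_commutator_of_nilpotent_supplement {K S H : Subgroup G} [K.Normal]
    [IsMulCommutative K] [S.Normal] [Group.IsNilpotent S] (hKS : K ≤ S) (hSH : S ⊔ H = ⊤)
    (hHS : ∀ h ∈ H, ∀ s ∈ S, ⁅h, s⁆ ∈ K) (hK : K ≤ ⁅K, ⊤⁆) : K ≤ ⁅H, K⁆ := by
  have := commutator_normal_of_supplement hSH hHS
  have hK_top : ⁅K, ⊤⁆ ≤ ⁅K, S⁆ ⊔ ⁅H, K⁆ := by
    refine commutator_le.mpr fun k hk g _ => ?_
    obtain ⟨s, hs, h, hh, rfl⟩ := exists_mul_eq_of_sup_eq_top hSH g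
    rw [show ⁅k, s * h⁆ = ⁅k, s⁆ * (s * ⁅h, k⁆⁻¹ * s⁻¹) by
      simp only [commutatorElement_def]; group]
    exact mul_mem (mem_sup_left (commutator_mem_commutator hk hs))
      (mem_sup_right (Normal.conj_mem ‹_› _ (inv_mem (commutator_mem_commutator hh hk)) s))
  set π := QuotientGroup.mk' ⁅H, K⁆
  have : Group.IsNilpotent (S.map π) :=
    Group.nilpotent_of_surjective _ (π.subgroupMap_surjective S)
  have hbot : K.map π = ⊥ := eq_bot_of_le_commutator (map_mono hKS) <| calc
    K.map π ≤ (⁅K, S⁆ ⊔ ⁅H, K⁆).map π := map_mono (hK.trans hK_top)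
    _ = ⁅K.map π, S.map π⁆ := by
      rw [map_sup, map_commutator, QuotientGroup.map_mk'_self, sup_bot_eq]
  rwa [map_eq_bot_iff, QuotientGroup.ker_mk'] at hbot

theorem exists_isCompl_and_inf_center_eq_bot_of_isPGroup [Finite G] {p : ℕ} [Fact p.Prime]
    {K : Subgroup G} [K.Normal] [IsMulCommutative K] [Group.IsNilpotent (G ⧸ K)]
    (hKp : IsPGroup p K) (hK : K ≤ ⁅K, ⊤⁆) : (∃ C, IsCompl K C) ∧ K ⊓ center G = ⊥ := by
  obtain ⟨P⟩ : Nonempty (Sylow p (G ⧸ K)) := inferInstance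
  set S := (P : Subgroup (G ⧸ K)).comap (QuotientGroup.mk' K)
  have hKS : K ≤ S := by
    rw [← QuotientGroup.ker_mk' K]; exact MonoidHom.ker_le_comap _ _
  have hSp : IsPGroup p S :=
    P.isPGroup'.comap_of_ker_isPGroup _ (by rwa [QuotientGroup.ker_mk'])
  have : S.Normal := Normal.comap inferInstance _
  have : Group.IsNilpotent S := hSp.isNilpotent
  have hS_index : p.Coprime S.index := by
    rw [index_comap_of_surjective _ (QuotientGroup.mk'_surjective K)]
    exact (Nat.Prime.coprime_iff_not_dvd Fact.out).mpr P.not_dvd_index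
  obtain ⟨H, hSH⟩ := exists_right_complement'_of_coprime (N := S) <| by
    obtain ⟨n, hn⟩ := IsPGroup.iff_card.mp hSp
    rw [hn]; exact hS_index.pow_left n
  have hHp : (Nat.card H).Coprime p := by
    rw [← (isComplement'_comm.mp hSH).index_eq_card]; exact hS_index.symm
  have hcop : (Nat.card H).Coprime (Nat.card K) := by
    obtain ⟨n, hn⟩ := IsPGroup.iff_card.mp hKp
    rw [hn]; exact hHp.pow_right n
  have hHS : ∀ h ∈ H, ∀ s ∈ S, ⁅h, s⁆ ∈ K := by
    intro h hh s hs
    rw [← QuotientGroup.ker_mk' K, MonoidHom.mem_ker, map_commutatorElement,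
      commutatorElement_eq_one_iff_commute]
    refine (Group.commute_of_coprime_orderOf ?_).symm
    have hph : p.Coprime (orderOf (QuotientGroup.mk' K h)) :=
      hHp.symm.coprime_dvd_right ((orderOf_map_dvd _ h).trans (orderOf_dvd_natCard H hh))
    simpa using P.isPGroup'.orderOf_coprime hph ⟨_, hs⟩
  have hKH : K ≤ ⁅H, K⁆ := le_commutator_of_nilpotent_supplement hKS hSH.sup_eq_top hHS hK
  have hKC : K ⊓ centralizer H = ⊥ := inf_centralizer_eq_bot_of_coprime hcop hKH
  exact ⟨⟨_, isCompl_normalizer_of_coprime hcop hKC hKS hSH hHS⟩,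
    eq_bot_iff.mpr (hKC ▸ inf_le_inf_left K (center_le_centralizer _))⟩

section PowRange

open scoped IsMulCommutative

variable (K : Subgroup G) [IsMulCommutative K]

def powRange (n : ℕ) : Subgroup G :=
  (powMonoidHom n : K →* K).range.map K.subtype

variable {K}

theorem mem_powRange {n : ℕ} {x : G} : x ∈ K.powRange n ↔ ∃ k ∈ K, k ^ n = x := by
  simpa [powRange] using fun k hk h => h ▸ pow_mem hk n

theorem powRange_le (n : ℕ) : K.powRange n ≤ K := map_subtype_le _

instance powRange_normal [K.Normal] (n : ℕ) : (K.powRange n).Normal where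
  conj_mem x hx g := by
    obtain ⟨k, hk, rfl⟩ := mem_powRange.mp hx
    exact mem_powRange.mpr ⟨g * k * g⁻¹, Normal.conj_mem ‹_› k hk g, conj_pow⟩

theorem powRange_inf_powRange_eq_bot [Finite G] {a b : ℕ} (hab : a.Coprime b)
    (hcard : a * b = Nat.card K) : K.powRange a ⊓ K.powRange b = ⊥ := by
  rw [eq_bot_iff]
  rintro x ⟨hxa, hxb⟩
  obtain ⟨k, hk, rfl⟩ := mem_powRange.mp hxa
  obtain ⟨k', hk', hkk'⟩ := mem_powRange.mp hxb
  have h₁ : (k ^ a) ^ b = 1 := by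
    rw [← pow_mul, hcard]; exact congrArg Subtype.val (pow_card_eq_one' (G := K) (x := ⟨k, hk⟩))
  have h₂ : (k ^ a) ^ a = 1 := by
    rw [← hkk', ← pow_mul, mul_comm, hcard]
    exact congrArg Subtype.val (pow_card_eq_one' (G := K) (x := ⟨k', hk'⟩))
  simpa [hab] using pow_gcd_eq_one.mpr ⟨h₂, h₁⟩

theorem le_powRange_sup_powRange {a b : ℕ} (hab : a.Coprime b) :
    K ≤ K.powRange a ⊔ K.powRange b := by
  intro k hk
  have hk' : k = (k ^ a) ^ Nat.gcdA a b * (k ^ b) ^ Nat.gcdB a b := by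
    rw [← zpow_natCast, ← zpow_natCast, ← zpow_mul, ← zpow_mul, ← zpow_add, ← Nat.gcd_eq_gcd_ab,
      hab.gcd_eq_one, Nat.cast_one, zpow_one]
  rw [hk']
  exact mul_mem_sup (zpow_mem (mem_powRange.mpr ⟨k, hk, rfl⟩) _)
    (zpow_mem (mem_powRange.mpr ⟨k, hk, rfl⟩) _)

theorem isPGroup_map_mk'_powRange [K.Normal] {p : ℕ} (e : ℕ) :
    IsPGroup p (K.map (QuotientGroup.mk' (K.powRange (p ^ e)))) := by
  rintro ⟨_, k, hk, rfl⟩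
  refine ⟨e, Subtype.ext ?_⟩
  simpa [← map_pow] using (QuotientGroup.eq_one_iff _).mpr (mem_powRange.mpr ⟨k, hk, rfl⟩)

theorem powRange_ne_bot [Finite G] {p n : ℕ} [Fact p.Prime] (hpK : p ∣ Nat.card K)
    (hpn : ¬ p ∣ n) : K.powRange n ≠ ⊥ := fun hbot => by
  obtain ⟨x, hx⟩ := exists_prime_orderOf_dvd_card' (G := K) p hpK
  have hx1 : (x : G) ^ n = 1 := mem_bot.mp (hbot ▸ mem_powRange.mpr ⟨x, x.2, rfl⟩)
  have := orderOf_dvd_of_pow_eq_one hx1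
  rw [orderOf_coe, hx] at this
  exact hpn this

end PowRange

section Quotient

variable {A K : Subgroup G} [A.Normal]

theorem exists_supplement_of_quotient
    (h : (∃ C, IsCompl (K.map (QuotientGroup.mk' A)) C) ∧
      K.map (QuotientGroup.mk' A) ⊓ center (G ⧸ A) = ⊥) :
    (∃ X, A ≤ X ∧ K ⊔ X = ⊤ ∧ K ⊓ X ≤ A) ∧ K ⊓ center G ≤ A := by
  obtain ⟨⟨C, hC⟩, hZ⟩ := h
  have hAX : A ≤ C.comap (QuotientGroup.mk' A) := fun a ha => by
    simp [(QuotientGroup.eq_one_iff a).mpr ha]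
  refine ⟨⟨_, hAX, ?_, fun x ⟨hxK, hxC⟩ => ?_⟩, fun z ⟨hzK, hzZ⟩ => ?_⟩
  · rw [← comap_map_eq_self ((QuotientGroup.ker_mk' A).trans_le (hAX.trans le_sup_right)),
      map_sup, map_comap_eq_self_of_surjective (QuotientGroup.mk'_surjective A), hC.sup_eq_top,
      comap_top]
  · exact (QuotientGroup.eq_one_iff x).mp
      (mem_bot.mp (hC.inf_eq_bot ▸ ⟨mem_map_of_mem _ hxK, hxC⟩))
  · refine (QuotientGroup.eq_one_iff z).mp (mem_bot.mp (hZ ▸ ⟨mem_map_of_mem _ hzK,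
      mem_center_iff.mpr fun q => ?_⟩))
    obtain ⟨g, rfl⟩ := QuotientGroup.mk'_surjective A q
    exact congrArg (QuotientGroup.mk' A) (mem_center_iff.mp hzZ g)

theorem card_map_mk'_lt [Finite G] (hAK : A ≤ K) (hA : A ≠ ⊥) :
    Nat.card (K.map (QuotientGroup.mk' A)) < Nat.card K := by
  refine lt_of_le_of_ne (Nat.le_of_dvd Nat.card_pos (card_map_dvd _ _)) fun heq => hA ?_
  have hinj := ((Nat.bijective_iff_surjective_and_card _).mpr
    ⟨(QuotientGroup.mk' A).subgroupMap_surjective K, heq.symm⟩).injective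
  refine eq_bot_iff.mpr fun a ha => ?_
  have := @hinj ⟨a, hAK ha⟩ 1 (Subtype.ext ((QuotientGroup.eq_one_iff a).mpr ha))
  simpa using congrArg Subtype.val this

end Quotient

theorem isCompl_inf_of_supplements {K A B X Y : Subgroup G} [B.Normal] (hAB : A ⊓ B = ⊥)
    (hK : K ≤ A ⊔ B) (hBK : B ≤ K) (hAX : A ≤ X) (hBY : B ≤ Y) (hX : K ⊔ X = ⊤)
    (hY : K ⊔ Y = ⊤) (hKX : K ⊓ X ≤ A) (hKY : K ⊓ Y ≤ B) : IsCompl K (X ⊓ Y) := by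
  refine ⟨disjoint_iff.mpr (eq_bot_iff.mpr ?_), codisjoint_iff.mpr (eq_top_iff.mpr ?_)⟩
  · exact hAB ▸ le_inf ((inf_le_inf_left K inf_le_left).trans hKX)
      ((inf_le_inf_left K inf_le_right).trans hKY)
  · have hBX : B ⊔ X = ⊤ := top_le_iff.mp <|
      hX ▸ sup_le (hK.trans (sup_le (hAX.trans le_sup_right) le_sup_left)) le_sup_right
    have hY' : Y ≤ B ⊔ (X ⊓ Y) := fun y hy => by
      obtain ⟨b, hb, x, hx, rfl⟩ := exists_mul_eq_of_sup_eq_top hBX y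
      exact mul_mem_sup hb ⟨hx, (mul_mem_cancel_left (hBY hb)).mp hy⟩
    calc ⊤ = K ⊔ Y := hY.symm
      _ ≤ K ⊔ (X ⊓ Y) :=
        sup_le le_sup_left (hY'.trans (sup_le (hBK.trans le_sup_left) le_sup_right))

theorem exists_isCompl_and_inf_center_eq_bot [Finite G] (K : Subgroup G) [K.Normal]
    [IsMulCommutative K] [Group.IsNilpotent (G ⧸ K)] (hK : K ≤ ⁅K, ⊤⁆) :
    (∃ C, IsCompl K C) ∧ K ⊓ center G = ⊥ := by
  induction hn : Nat.card K using Nat.strong_induction_on generalizing G with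
  | _ n ih =>
  rcases eq_or_ne (Nat.card K) 1 with hK1 | hK1
  · have : Fact (Nat.Prime 2) := ⟨Nat.prime_two⟩
    exact exists_isCompl_and_inf_center_eq_bot_of_isPGroup (p := 2)
      (IsPGroup.of_card (n := 0) hK1) hK
  obtain ⟨p, hp, hpK⟩ := Nat.exists_prime_and_dvd hK1
  have : Fact p.Prime := ⟨hp⟩
  have hcard := Nat.ordProj_mul_ordCompl_eq_self (Nat.card K) p
  have hcop : (ordProj[p] (Nat.card K)).Coprime (ordCompl[p] (Nat.card K)) :=
    (Nat.coprime_ordCompl hp Nat.card_pos.ne').pow_left _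
  -- `A` is the `p'`-part and `B` the `p`-part of `K`
  set A := K.powRange (ordProj[p] (Nat.card K))
  set B := K.powRange (ordCompl[p] (Nat.card K))
  have step (N : Subgroup G) [N.Normal] (hNK : N ≤ K)
      (h : IsPGroup p (K.map (QuotientGroup.mk' N)) ∨ Nat.card (K.map (QuotientGroup.mk' N)) < n) :
      (∃ X, N ≤ X ∧ K ⊔ X = ⊤ ∧ K ⊓ X ≤ N) ∧ K ⊓ center G ≤ N := by
    have : (K.map (QuotientGroup.mk' N)).Normal :=
      Normal.map inferInstance _ (QuotientGroup.mk'_surjective N)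
    have : Group.IsNilpotent ((G ⧸ N) ⧸ K.map (QuotientGroup.mk' N)) :=
      Group.nilpotent_of_mulEquiv (QuotientGroup.quotientQuotientEquivQuotient N K hNK).symm
    have hK' : K.map (QuotientGroup.mk' N) ≤ ⁅K.map (QuotientGroup.mk' N), ⊤⁆ :=
      (map_mono hK).trans (by rw [map_commutator]; exact commutator_mono le_rfl le_top)
    exact exists_supplement_of_quotient <| h.elim
      (fun hp => exists_isCompl_and_inf_center_eq_bot_of_isPGroup hp hK')
      (fun hlt => ih _ (hn ▸ hlt) _ hK' rfl)
  obtain ⟨⟨X, hAX, hX, hKX⟩, hZA⟩ := step A (powRange_le _) (.inl (isPGroup_map_mk'_powRange _))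
  obtain ⟨⟨Y, hBY, hY, hKY⟩, hZB⟩ := step B (powRange_le _) <| .inr <| hn ▸
    card_map_mk'_lt (powRange_le _) (powRange_ne_bot hpK (Nat.not_dvd_ordCompl hp Nat.card_pos.ne'))
  have hAB := powRange_inf_powRange_eq_bot hcop hcard
  exact ⟨⟨X ⊓ Y, isCompl_inf_of_supplements hAB (le_powRange_sup_powRange hcop)
    (powRange_le _) hAX hBY hX hY hKX hKY⟩, eq_bot_iff.mpr (hAB ▸ le_inf hZA hZB)⟩

end Subgroup

theorem Subgroup.IsComplement'.isCarter {G : Type} [Group G] {K C : Subgroup G} [K.Normal]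
    [IsMulCommutative K] [Group.IsNilpotent (G ⧸ K)] (hC : K.IsComplement' C)
    (hZ : K ⊓ center G = ⊥) : IsCarter C := by
  refine ⟨Group.nilpotent_of_mulEquiv (isComplement'_comm.mp hC).QuotientMulEquiv,
    le_antisymm (fun x hx => ?_) le_normalizer⟩
  obtain ⟨k, hk, c, hc, rfl⟩ := exists_mul_eq_of_sup_eq_top hC.sup_eq_top x
  have hkC : k ∈ centralizer C := inf_normalizer_le_centralizer hC.disjoint
    ⟨hk, by simpa using mul_mem hx (inv_mem (le_normalizer hc))⟩
  have hkZ : k ∈ center G := mem_center_iff.mpr fun g => by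
    obtain ⟨k', hk', c', hc', rfl⟩ := exists_mul_eq_of_sup_eq_top hC.sup_eq_top g
    exact Commute.mul_left (le_centralizer K hk k' hk') (hkC c' hc')
  rw [show k = 1 from mem_bot.mp (hZ ▸ ⟨hk, hkZ⟩), one_mul]
  exact hc

theorem NilpotentResidual.le_commutator_top {G : Type} [Group G] {K : Subgroup G}
    {hKn : K.Normal} (hK : NilpotentResidual K hKn) : K ≤ ⁅K, ⊤⁆ := by
  have := hK.1
  refine hK.2 _ inferInstance (Subgroup.isNilpotent_of_ker_le_center
    (QuotientGroup.map ⁅K, ⊤⁆ K (MonoidHom.id G) (commutator_le_left K ⊤)) fun q hq => ?_)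
  obtain ⟨g, rfl⟩ := QuotientGroup.mk_surjective q
  have hg : g ∈ K := (QuotientGroup.eq_one_iff g).mp hq
  refine mem_center_iff.mpr fun q' => ?_
  obtain ⟨x, rfl⟩ := QuotientGroup.mk_surjective q'
  rw [← QuotientGroup.mk_mul, ← QuotientGroup.mk_mul, QuotientGroup.eq]
  simpa [commutatorElement_def, mul_assoc] using
    commutator_mem_commutator (inv_mem hg) (mem_top x⁻¹)

theorem stmt0_general (G : Type) [Group G] [Fintype G]
    (K : Subgroup G) (hKn : K.Normal) (hK : NilpotentResidual K hKn)
    (hab : ∀ x y : ↥K, x * y = y * x) :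
    (∃ C : Subgroup G, K.IsComplement' C) ∧
      ∀ C : Subgroup G, K.IsComplement' C → IsCarter C := by
  have : IsMulCommutative K := isMulCommutative_iff.mpr hab
  have := hK.1
  obtain ⟨⟨C, hC⟩, hZ⟩ := exists_isCompl_and_inf_center_eq_bot K hK.le_commutator_top
  exact ⟨⟨C, isComplement'_of_isCompl hC⟩, fun C hC => hC.isCarter hZ⟩

theorem stmt0 (G : Type) [Group G] [Fintype G] (hsol : IsSolvable G)
    (K : Subgroup G) (hKn : K.Normal) (hK : NilpotentResidual K hKn)
    (hab : ∀ x y : ↥K, x * y = y * x) :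
    (∃ C : Subgroup G, K.IsComplement' C) ∧
      ∀ C : Subgroup G, K.IsComplement' C → IsCarter C :=
  stmt0_general G K hKn hK hab
end
end

section
/- Let G be a finite solvable group, C a Carter subgroup of G, and K the smallest normal subgroup of G such that G/K is nilpotent. Then G = KC. -/
noncomputable section
open scoped Classical

variable {G : Type}

/-!
Carter subgroups of a finite solvable group are conjugate, by induction on `|G|`. Modulo a minimal
normal subgroup `N`, which is abelian, the images of two Carter subgroups are Carter subgroups and
hence conjugate; this reduces to the case `G = N C₁ = N C₂`. If some `Cᵢ ∩ C_G(N)` is nontrivial,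
it is normal in `G` and one passes to the quotient by it. Otherwise a Sylow `p`-subgroup of `Cᵢ`
for a prime `p` dividing `|N|` would centralize `N`, so `Cᵢ` is a complement of `N` of coprime
order, and the Schur–Zassenhaus theorem makes `C₁` and `C₂` conjugate.

Conjugacy gives a Frattini argument: a subgroup containing a Carter subgroup is self-normalizing.
Hence `KC/K` is a self-normalizing subgroup of the nilpotent group `G/K`, so it is all of `G/K`.
-/

open Pointwise Subgroup

namespace Subgroup

variable {G' : Type*} [Group G] [Group G']

theorem mem_normalizer_iff_conj_smul_eq {K : Subgroup G} {g : G} :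
    g ∈ normalizer (K : Set G) ↔ MulAut.conj g • K = K :=
  mem_normalizer_iff_map_conj_eq

theorem conj_smul_eq_conj_smul_iff {K : Subgroup G} {g h : G} :
    MulAut.conj g • K = MulAut.conj h • K ↔ h⁻¹ * g ∈ normalizer (K : Set G) := by
  rw [mem_normalizer_iff_conj_smul_eq, map_mul, mul_smul, map_inv, inv_smul_eq_iff]

theorem exists_conj_smul_eq_symm {K₁ K₂ : Subgroup G} (h : ∃ g : G, MulAut.conj g • K₁ = K₂) :
    ∃ g : G, MulAut.conj g • K₂ = K₁ :=
  let ⟨g, hg⟩ := h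
  ⟨g⁻¹, by rw [← hg, map_inv, inv_smul_smul]⟩

theorem map_conj_smul (f : G →* G') (g : G) (K : Subgroup G) :
    (MulAut.conj g • K).map f = MulAut.conj (f g) • K.map f := by
  ext x
  simp [pointwise_smul_def]

theorem normalizer_conj_smul (g : G) (K : Subgroup G) :
    normalizer (MulAut.conj g • K : Subgroup G) = MulAut.conj g • normalizer (K : Set G) :=
  (map_equiv_normalizer_eq K (MulAut.conj g)).symm

theorem normal_of_le_normalizer_of_sup_eq_top {A B X : Subgroup G}
    (hA : A ≤ normalizer (X : Set G)) (hB : B ≤ normalizer (X : Set G)) (hAB : A ⊔ B = ⊤) :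
    X.Normal :=
  normalizer_eq_top_iff.mp (top_le_iff.mp (hAB ▸ sup_le hA hB))

theorem normalizer_le_normalizer_centralizer (H : Subgroup G) :
    normalizer (H : Set G) ≤ normalizer (centralizer (H : Set G) : Set G) := by
  refine le_normalizer_iff.mpr fun g hg z hz => mem_centralizer_iff.mpr fun h hh => ?_
  have hh' : g⁻¹ * h * g ∈ H := by
    simpa using (hg (g⁻¹ * h * g)).mpr (by simpa [mul_assoc] using hh)
  have hcomm := mem_centralizer_iff.mp hz _ hh'
  calc h * (g * z * g⁻¹) = g * ((g⁻¹ * h * g) * z) * g⁻¹ := by group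
    _ = g * z * g⁻¹ * h := by rw [hcomm]; group

theorem normal_inf_centralizer {N C : Subgroup G} [N.Normal] (hNC : N ⊔ C = ⊤) :
    (C ⊓ centralizer (N : Set G)).Normal := by
  refine normal_of_le_normalizer_of_sup_eq_top ?_ ?_ hNC
  · exact (le_centralizer_iff.mp le_rfl).trans
      ((centralizer_le inf_le_right).trans (centralizer_le_normalizer _))
  · exact (le_inf le_normalizer (normalizer_eq_top (centralizer (N : Set G)) ▸ le_top)).trans
      inf_normalizer_le_normalizer_inf

theorem card_lt_of_ne_top [Finite G] {L : Subgroup G} (h : L ≠ ⊤) : Nat.card L < Nat.card G :=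
  (card_le_card_group L).lt_of_ne ((card_eq_iff_eq_top L).not.mpr h)

theorem card_quotient_lt_of_ne_bot [Finite G] {N : Subgroup G} [N.Normal] (h : N ≠ ⊥) :
    Nat.card (G ⧸ N) < Nat.card G := by
  rw [card_eq_card_quotient_mul_card_subgroup N]
  exact lt_mul_of_one_lt_right Nat.card_pos ((one_lt_card_iff_ne_bot N).mpr h)

section SchurZassenhaus

open MulAction MulOpposite

variable [Finite G] {N K K₁ K₂ : Subgroup G} [N.Normal] [IsMulCommutative N]

theorem IsComplement'.exists_stabilizer_eq (hco : (Nat.card N).Coprime N.index)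
    (h : N.IsComplement' K) : ∃ α : N.QuotientDiff, stabilizer G α = K := by
  let α : N.QuotientDiff := Quotient.mk'' ⟨K, h.symm⟩
  have hle : K ≤ stabilizer G α := fun k hk =>
    congrArg Quotient.mk'' (Subtype.ext (op_smul_coe_set (K.inv_mem hk)))
  refine ⟨α, (eq_of_le_of_card_ge hle ?_).symm⟩
  rw [← (isComplement'_stabilizer_of_coprime hco).symm.index_eq_card, h.symm.index_eq_card]

theorem exists_conj_smul_eq_of_isComplement' (hco : (Nat.card N).Coprime N.index)
    (h₁ : N.IsComplement' K₁) (h₂ : N.IsComplement' K₂) : ∃ g : G, MulAut.conj g • K₁ = K₂ := by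
  obtain ⟨α₁, rfl⟩ := h₁.exists_stabilizer_eq hco
  obtain ⟨α₂, rfl⟩ := h₂.exists_stabilizer_eq hco
  obtain ⟨n, rfl⟩ := exists_smul_eq hco α₁ α₂
  exact ⟨n, (stabilizer_smul_eq_stabilizer_map_conj (n : G) α₁).symm⟩

end SchurZassenhaus

end Subgroup

theorem IsPGroup.inf_centralizer_ne_bot [Group G] [Finite G] {p : ℕ} [Fact p.Prime]
    {P N : Subgroup G} [N.Normal] (hP : IsPGroup p P) (hN : p ∣ Nat.card N) :
    N ⊓ centralizer (P : Set G) ≠ ⊥ := by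
  let : MulDistribMulAction P N :=
    .compHom N ((ConjAct.toConjAct : G ≃* ConjAct G).toMonoidHom.comp P.subtype)
  obtain ⟨b, hb, hb1⟩ := hP.exists_fixed_point_of_prime_dvd_card_of_fixed_point N hN
    (a := 1) (fun x => smul_one x)
  rw [Ne, eq_bot_iff_forall]
  push Not
  refine ⟨b, ⟨b.2, fun x hx => ?_⟩, fun h => hb1 (Subtype.ext h.symm)⟩
  have hxb : x * b * x⁻¹ = b := congrArg Subtype.val (hb ⟨x, hx⟩)
  exact mul_inv_eq_iff_eq_mul.mp hxb

def IsMinimalNormal [Group G] (N : Subgroup G) : Prop :=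
  Minimal (fun N : Subgroup G => N.Normal ∧ N ≠ ⊥) N

namespace IsMinimalNormal

variable [Group G] {N C : Subgroup G}

theorem exists_of_nontrivial [Finite G] [Nontrivial G] : ∃ N : Subgroup G, IsMinimalNormal N :=
  exists_minimal_of_wellFoundedLT _ ⟨⊤, inferInstance, top_ne_bot⟩

theorem isMulCommutative [Group.IsSolvable G] (hN : IsMinimalNormal N) : IsMulCommutative N := by
  have := hN.1.1
  refine le_centralizer_iff_isMulCommutative.mp (commutator_eq_bot_iff_le_centralizer.mp ?_)
  by_contra h
  exact (Group.IsSolvable.commutator_lt_of_ne_bot hN.1.2).ne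
    (hN.eq_of_le ⟨commutator_normal N N, h⟩ (commutator_le_left N N))

/-- The fixed points in `N` of a normal Sylow `p`-subgroup `P` of `C` form a nontrivial normal
subgroup of `G = NC`, hence all of `N`; so `P` lies in `C ∩ C_G(N) = 1`. -/
theorem coprime_card_of_inf_centralizer_eq_bot [Finite G] (hN : IsMinimalNormal N)
    [IsMulCommutative N] (hC : Group.IsNilpotent C) (hNC : N ⊔ C = ⊤)
    (hCN : C ⊓ centralizer (N : Set G) = ⊥) : (Nat.card N).Coprime (Nat.card C) := by
  have := hN.1.1
  refine Nat.coprime_of_dvd fun p hp hpN hpC => ?_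
  have := Fact.mk hp
  obtain ⟨Q⟩ : Nonempty (Sylow p C) := inferInstance
  set P := (Q : Subgroup C).map C.subtype
  have hPC : P ≤ C := map_subtype_le _
  have hCP : C ≤ normalizer (P : Set G) := by
    rw [← normal_subgroupOf_iff_le_normalizer hPC, subgroupOf,
      comap_map_eq_self_of_injective C.subtype_injective]
    infer_instance
  have hP : P ≠ ⊥ :=
    (map_eq_bot_iff_of_injective _ C.subtype_injective).not.mpr (Q.ne_bot_of_dvd_card hpC)
  have hW : (N ⊓ centralizer (P : Set G)).Normal := by
    refine normal_of_le_normalizer_of_sup_eq_top ?_ ?_ hNC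
    · exact (le_centralizer N).trans
        ((centralizer_le inf_le_left).trans (centralizer_le_normalizer _))
    · exact (le_inf (normalizer_eq_top N ▸ le_top)
        (hCP.trans (normalizer_le_normalizer_centralizer P))).trans
        inf_normalizer_le_normalizer_inf
  have hNP : N ≤ centralizer (P : Set G) := inf_eq_left.mp
    (hN.eq_of_le ⟨hW, (Q.isPGroup'.map C.subtype).inf_centralizer_ne_bot hpN⟩ inf_le_left)
  exact hP (le_bot_iff.mp (hCN ▸ le_inf hPC (le_centralizer_iff.mp hNP)))

end IsMinimalNormal

namespace IsCarter

variable {G' : Type} [Group G] [Group G'] {C : Subgroup G}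

theorem conj_smul (hC : IsCarter C) (g : G) : IsCarter (MulAut.conj g • C) :=
  have := hC.1
  ⟨Group.nilpotent_of_mulEquiv (equivSMul _ C), by rw [normalizer_conj_smul, hC.2]⟩

theorem subgroupOf (hC : IsCarter C) {L : Subgroup G} (hCL : C ≤ L) :
    IsCarter (C.subgroupOf L) :=
  have := hC.1
  ⟨Group.nilpotent_of_mulEquiv (subgroupOfEquivOfLe hCL).symm,
    by rw [← subgroupOf_normalizer_eq hCL, hC.2]⟩

theorem eq_top [Group.IsNilpotent G] (hC : IsCarter C) : C = ⊤ :=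
  normalizerCondition_iff_only_full_group_self_normalizing.mp
    Group.normalizerCondition_of_isNilpotent C hC.2

theorem eq_of_le (hC : IsCarter C) {D : Subgroup G} (hCD : C ≤ D) (hD : Group.IsNilpotent D) :
    C = D :=
  le_antisymm hCD (subgroupOf_eq_top.mp (hC.subgroupOf hCD).eq_top)

theorem map (hC : IsCarter C) {f : G →* G'} (hf : Function.Surjective f)
    (hN : normalizer ((C ⊔ f.ker : Subgroup G) : Set G) = C ⊔ f.ker) : IsCarter (C.map f) := by
  have := hC.1
  refine ⟨Group.nilpotent_of_surjective _ (f.subgroupMap_surjective C), ?_⟩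
  apply comap_injective hf
  rw [comap_normalizer_eq_of_surjective _ hf, comap_map_eq, hN]

end IsCarter

variable (G) in
def CarterConjugate [Group G] : Prop :=
  ∀ C₁ C₂ : Subgroup G, IsCarter C₁ → IsCarter C₂ → ∃ g : G, MulAut.conj g • C₁ = C₂

section Conjugacy

variable [Group G] {C C₁ C₂ L N : Subgroup G}

theorem CarterConjugate.exists_conj_smul_eq_of_le (hL : CarterConjugate L)
    (hC₁ : IsCarter C₁) (hC₂ : IsCarter C₂) (h₁ : C₁ ≤ L) (h₂ : C₂ ≤ L) :
    ∃ g ∈ L, MulAut.conj g • C₁ = C₂ := by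
  obtain ⟨g, hg⟩ := hL _ _ (hC₁.subgroupOf h₁) (hC₂.subgroupOf h₂)
  rw [conj_smul_subgroupOf h₁, subgroupOf_inj, inf_of_le_left (conj_smul_le_of_le h₁ g),
    inf_of_le_left h₂] at hg
  exact ⟨g, g.2, hg⟩

/-- Frattini argument: `x ∈ N_G(L)` moves `C` to a Carter subgroup of `L`, which is
`L`-conjugate to `C`, so `x ∈ L N_G(C) = L`. -/
theorem IsCarter.normalizer_eq_of_le (hC : IsCarter C) (hCL : C ≤ L)
    (hL : L ≠ ⊤ → CarterConjugate L) : normalizer (L : Set G) = L := by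
  rcases eq_or_ne L ⊤ with rfl | hL_ne
  · exact normalizer_eq_top_iff.mpr inferInstance
  refine le_antisymm (fun x hx => ?_) le_normalizer
  have hxC : MulAut.conj x • C ≤ L := by
    rw [← mem_normalizer_iff_conj_smul_eq.mp hx]
    exact pointwise_smul_le_pointwise_smul_iff.mpr hCL
  obtain ⟨h, hh, hhx⟩ := (hL hL_ne).exists_conj_smul_eq_of_le hC (hC.conj_smul x) hCL hxC
  have : h⁻¹ * x ∈ C := hC.2 ▸ conj_smul_eq_conj_smul_iff.mp hhx.symm
  simpa using L.mul_mem hh (hCL this)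

theorem IsCarter.exists_conj_smul_sup_eq
    (hsub : ∀ L : Subgroup G, L ≠ ⊤ → CarterConjugate L)
    (hquot : ∀ E : Subgroup G, [E.Normal] → E ≠ ⊥ → CarterConjugate (G ⧸ E))
    (hC₁ : IsCarter C₁) (hC₂ : IsCarter C₂) {E : Subgroup G} [E.Normal] (hE : E ≠ ⊥) :
    ∃ g : G, MulAut.conj g • C₁ ⊔ E = C₂ ⊔ E := by
  have hmap {C : Subgroup G} (hC : IsCarter C) : IsCarter (C.map (QuotientGroup.mk' E)) :=
    hC.map (QuotientGroup.mk'_surjective E) (hC.normalizer_eq_of_le le_sup_left (hsub _))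
  obtain ⟨x, hx⟩ := hquot E hE _ _ (hmap hC₁) (hmap hC₂)
  obtain ⟨g, rfl⟩ := QuotientGroup.mk'_surjective E x
  refine ⟨g, ?_⟩
  simpa only [← map_conj_smul, comap_map_eq, QuotientGroup.ker_mk'] using
    congrArg (comap (QuotientGroup.mk' E)) hx

theorem IsCarter.exists_conj_smul_eq_of_normal_le
    (hsub : ∀ L : Subgroup G, L ≠ ⊤ → CarterConjugate L)
    (hquot : ∀ E : Subgroup G, [E.Normal] → E ≠ ⊥ → CarterConjugate (G ⧸ E))
    (hC₁ : IsCarter C₁) (hC₂ : IsCarter C₂) {E : Subgroup G} [E.Normal] (hE : E ≠ ⊥)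
    (hEC : E ≤ C₁) : ∃ g : G, MulAut.conj g • C₁ = C₂ := by
  obtain ⟨g, hg⟩ := hC₁.exists_conj_smul_sup_eq hsub hquot hC₂ hE
  have hEg : E ≤ MulAut.conj g • C₁ := by
    rw [← Normal.conj_smul_eq_self g E]
    exact pointwise_smul_le_pointwise_smul_iff.mpr hEC
  rw [sup_of_le_left hEg] at hg
  exact ⟨g, (hC₂.eq_of_le (le_sup_left.trans hg.ge) (hC₁.conj_smul g).1).symm⟩

theorem IsCarter.exists_conj_smul_eq_of_sup_eq_top [Finite G]
    (hsub : ∀ L : Subgroup G, L ≠ ⊤ → CarterConjugate L)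
    (hquot : ∀ E : Subgroup G, [E.Normal] → E ≠ ⊥ → CarterConjugate (G ⧸ E))
    (hN : IsMinimalNormal N) [IsMulCommutative N] (hC₁ : IsCarter C₁) (hC₂ : IsCarter C₂)
    (h₁ : N ⊔ C₁ = ⊤) (h₂ : N ⊔ C₂ = ⊤) : ∃ g : G, MulAut.conj g • C₁ = C₂ := by
  have := hN.1.1
  rcases ne_or_eq (C₁ ⊓ centralizer (N : Set G)) ⊥ with hE₁ | hE₁
  · have := normal_inf_centralizer h₁
    exact hC₁.exists_conj_smul_eq_of_normal_le hsub hquot hC₂ hE₁ inf_le_left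
  rcases ne_or_eq (C₂ ⊓ centralizer (N : Set G)) ⊥ with hE₂ | hE₂
  · have := normal_inf_centralizer h₂
    exact exists_conj_smul_eq_symm
      (hC₂.exists_conj_smul_eq_of_normal_le hsub hquot hC₁ hE₂ inf_le_left)
  have hcompl {C : Subgroup G} (hC : IsCarter C) (hNC : N ⊔ C = ⊤)
      (hE : C ⊓ centralizer (N : Set G) = ⊥) :
      N.IsComplement' C ∧ (Nat.card N).Coprime N.index := by
    have hco := hN.coprime_card_of_inf_centralizer_eq_bot hC.1 hNC hE
    have hc : N.IsComplement' C := isComplement'_of_disjoint_and_mul_eq_univ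
      (disjoint_of_coprime_natCard hco) (by rw [← normal_mul, hNC, coe_top])
    exact ⟨hc, hc.symm.index_eq_card ▸ hco⟩
  obtain ⟨hc₁, hco⟩ := hcompl hC₁ h₁ hE₁
  exact exists_conj_smul_eq_of_isComplement' hco hc₁ (hcompl hC₂ h₂ hE₂).1

theorem CarterConjugate.of_subgroups_of_quotients [Finite G] [Group.IsSolvable G]
    (hsub : ∀ L : Subgroup G, L ≠ ⊤ → CarterConjugate L)
    (hquot : ∀ E : Subgroup G, [E.Normal] → E ≠ ⊥ → CarterConjugate (G ⧸ E)) :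
    CarterConjugate G := by
  intro C₁ C₂ hC₁ hC₂
  by_cases hG : Group.IsNilpotent G
  · exact ⟨1, by rw [hC₁.eq_top, hC₂.eq_top, map_one, one_smul]⟩
  have : Nontrivial G := by
    by_contra h
    rw [not_nontrivial_iff_subsingleton] at h
    exact hG inferInstance
  obtain ⟨N, hN⟩ := IsMinimalNormal.exists_of_nontrivial (G := G)
  have := hN.1.1
  have := hN.isMulCommutative
  obtain ⟨g, hg⟩ := hC₁.exists_conj_smul_sup_eq hsub hquot hC₂ hN.1.2
  suffices ∃ h : G, MulAut.conj h • MulAut.conj g • C₁ = C₂ by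
    obtain ⟨h, hh⟩ := this
    exact ⟨h * g, by rw [map_mul, mul_smul, hh]⟩
  rcases ne_or_eq (MulAut.conj g • C₁ ⊔ N) ⊤ with hL | hL
  · obtain ⟨h, -, hh⟩ := (hsub _ hL).exists_conj_smul_eq_of_le (hC₁.conj_smul g) hC₂
      le_sup_left (le_sup_left.trans hg.ge)
    exact ⟨h, hh⟩
  · exact (hC₁.conj_smul g).exists_conj_smul_eq_of_sup_eq_top hsub hquot hN hC₂
      (by rw [sup_comm, hL]) (by rw [sup_comm, ← hg, hL])

end Conjugacy

theorem carterConjugate_of_isSolvable [Group G] [Finite G] [Group.IsSolvable G] :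
    CarterConjugate G := by
  induction hn : Nat.card G using Nat.strong_induction_on generalizing G with
  | _ n ih =>
    refine CarterConjugate.of_subgroups_of_quotients (fun L hL => ?_) (fun E _ hE => ?_)
    · exact ih (Nat.card L) (hn ▸ card_lt_of_ne_top hL) rfl
    · exact ih (Nat.card (G ⧸ E)) (hn ▸ card_quotient_lt_of_ne_bot hE) rfl

theorem IsCarter.sup_eq_top_of_isNilpotent_quotient [Group G] [Finite G] [Group.IsSolvable G]
    {C : Subgroup G} (hC : IsCarter C) (N : Subgroup G) [N.Normal]
    [Group.IsNilpotent (G ⧸ N)] : C ⊔ N = ⊤ := by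
  have hN : normalizer ((C ⊔ N : Subgroup G) : Set G) = C ⊔ N :=
    hC.normalizer_eq_of_le le_sup_left fun _ => carterConjugate_of_isSolvable
  have hmap := (hC.map (QuotientGroup.mk'_surjective N) (by rwa [QuotientGroup.ker_mk'])).eq_top
  rw [← QuotientGroup.ker_mk' N, ← comap_map_eq, hmap, comap_top]

theorem stmt1 (G : Type) [Group G] [Fintype G] (hsol : IsSolvable G)
    (C : Subgroup G) (hC : IsCarter C)
    (K : Subgroup G) (hKn : K.Normal) (hK : NilpotentResidual K hKn) :
    K ⊔ C = ⊤ := by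
  have : Group.IsSolvable G := hsol
  have := hK.1
  rw [sup_comm]
  exact hC.sup_eq_top_of_isNilpotent_quotient K

end
end
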